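/- Let 𝓗 be a finite hypergraph on a finite set V. If 𝓗 is a Tetris hypergraph, then 𝓗 satisfies condition (*): for every S ⊆ V with 𝓗_S ≠ ∅ there exists H ∈ 𝓗_S such that H ∩ H' ≠ ∅ for all H' ∈ 𝓗_S. -/

import Mathlib

/-- The minimum excludant of a set of natural numbers. -/
noncomputable def mex (S : Set ℕ) : ℕ := sInf {n : ℕ | n ∉ S}

open Classical in
/-- The Sprague–Grundy function of the impartial game with move relation `move`
(meaningful when every play is finite, i.e. the reversed move relation is
well-founded): it satisfies `sgFun move x = mex {sgFun move y | move x y}`. -/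
noncomputable def sgFun {X : Type*} (move : X → X → Prop) : X → ℕ :=
  if hwf : WellFounded (fun y x => move x y) then
    hwf.fix (fun x ih => mex {v : ℕ | ∃ (y : X) (h : move x y), ih y h = v})
  else fun _ => 0

open Classical in
/-- The Tetris function: the length of a longest play starting at `x`
(meaningful when every play is finite and the game is finitely branching):
it satisfies `tetrisFun move x = sup {tetrisFun move y + 1 | move x y}`. -/
noncomputable def tetrisFun {X : Type*} (move : X → X → Prop) : X → ℕ :=
  if hwf : WellFounded (fun y x => move x y) then
    hwf.fix (fun x ih => sSup {v : ℕ | ∃ (y : X) (h : move x y), v = ih y h + 1})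
  else fun _ => 0

/-- A game is SG decreasing if every move strictly decreases the SG value. -/
def SGDecreasing {X : Type*} (move : X → X → Prop) : Prop :=
  ∀ x y, move x y → sgFun move y < sgFun move x

/-- The move relation of the game `NIM_𝓗` on positions `ℕ^V`. -/
def nimMove {V : Type*} (𝓗 : Set (Finset V)) (x x' : V → ℕ) : Prop :=
  ∃ H ∈ 𝓗, (∀ i ∈ H, x' i < x i) ∧ ∀ i ∉ H, x' i = x i

/-- A hypergraph is Tetris if `NIM_𝓗` is SG decreasing. -/
def IsTetrisHypergraph {V : Type*} (𝓗 : Set (Finset V)) : Prop :=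
  SGDecreasing (nimMove 𝓗)

/-- The move relation of the `𝓗`-combination of the games `move i`. -/
def combMove {V : Type*} {X : V → Type*} (𝓗 : Set (Finset V))
    (move : ∀ i, X i → X i → Prop) (x x' : ∀ i, X i) : Prop :=
  ∃ H ∈ 𝓗, (∀ i ∈ H, move i (x i) (x' i)) ∧ ∀ i ∉ H, x' i = x i

/-- Condition (*): every nonempty induced subhypergraph has a hyperedge
intersecting all its hyperedges. -/
def CondStar {V : Type*} [DecidableEq V] (𝓗 : Set (Finset V)) : Prop :=
  ∀ S : Finset V, (∃ H ∈ 𝓗, H ⊆ S) →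
    ∃ H ∈ 𝓗, H ⊆ S ∧ ∀ H' ∈ 𝓗, H' ⊆ S → (H ∩ H').Nonempty


/-!
In an SG-decreasing game the SG value strictly drops along plays, so plays are finite, and a
position with a move has positive value. If every option of a position `x` had a move, they would
all have positive value and `x` would have value `0`; so a position with a move has a terminal
option. Apply this to the indicator position of `S`: a terminal option is obtained by emptying some
hyperedge `H ⊆ S`, and being terminal, it leaves every hyperedge inside `S` an empty heap, which
can only lie in `H`.
-/

section SpragueGrundy

variable {X : Type*} {move : X → X → Prop}

theorem SGDecreasing.wellFounded (h : SGDecreasing move) :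
    WellFounded (fun y x => move x y) :=
  Subrelation.wf (fun {y x} hxy => h x y hxy) (InvImage.wf (sgFun move) wellFounded_lt)

theorem sgFun_eq (hwf : WellFounded (fun y x => move x y)) (x : X) :
    sgFun move x = mex {v : ℕ | ∃ y, move x y ∧ sgFun move y = v} := by
  have hsg : sgFun move =
      hwf.fix fun x ih => mex {v : ℕ | ∃ (y : X) (h : move x y), ih y h = v} := by
    rw [sgFun, dif_pos hwf]
  rw [hsg, hwf.fix_eq]
  simp only [exists_prop]

theorem mex_eq_zero_of_zero_notMem {S : Set ℕ} (h : 0 ∉ S) : mex S = 0 :=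
  Nat.sInf_eq_zero.mpr (Or.inl h)

theorem SGDecreasing.exists_move_terminal (h : SGDecreasing move) {x y : X} (hxy : move x y) :
    ∃ z, move x z ∧ ∀ w, ¬ move z w := by
  by_contra! hnt
  have hx : sgFun move x = 0 := by
    rw [sgFun_eq h.wellFounded]
    refine mex_eq_zero_of_zero_notMem ?_
    rintro ⟨z, hz, hz0⟩
    obtain ⟨w, hw⟩ := hnt z hz
    have := h z w hw
    omega
  have := h x y hxy
  omega

end SpragueGrundy

section Nim

variable {V : Type*} {𝓗 : Set (Finset V)} {x : V → ℕ} {H : Finset V}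

theorem exists_nimMove_of_pos [DecidableEq V] (hH : H ∈ 𝓗) (hpos : ∀ i ∈ H, 0 < x i) :
    ∃ y, nimMove 𝓗 x y :=
  ⟨fun i => if i ∈ H then 0 else x i, H, hH,
    fun i hi => by simpa [hi] using hpos i hi, fun i hi => by simp [hi]⟩

theorem exists_eq_zero_of_forall_not_nimMove (hx : ∀ y, ¬ nimMove 𝓗 x y) (hH : H ∈ 𝓗) :
    ∃ i ∈ H, x i = 0 := by
  classical
  by_contra! hpos
  obtain ⟨y, hy⟩ := exists_nimMove_of_pos hH fun i hi => Nat.pos_of_ne_zero (hpos i hi)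
  exact hx y hy

end Nim

theorem stmt7_general {V : Type*} [DecidableEq V]
    (𝓗 : Set (Finset V))
    (hT : IsTetrisHypergraph 𝓗) : CondStar 𝓗 := by
  rintro S ⟨H₀, hH₀, hH₀S⟩
  let x : V → ℕ := fun i => if i ∈ S then 1 else 0
  obtain ⟨y, hy⟩ := exists_nimMove_of_pos (x := x) hH₀ fun i hi => by simp [x, hH₀S hi]
  obtain ⟨z, ⟨H, hH, hlt, heq⟩, hz⟩ := SGDecreasing.exists_move_terminal hT hy
  have hHS : H ⊆ S := fun i hi => by
    by_contra hiS
    simpa [x, hiS] using hlt i hi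
  refine ⟨H, hH, hHS, fun H' hH' hH'S => ?_⟩
  obtain ⟨i, hi, hzi⟩ := exists_eq_zero_of_forall_not_nimMove hz hH'
  refine ⟨i, Finset.mem_inter.mpr ⟨?_, hi⟩⟩
  by_contra hiH
  simpa [x, hH'S hi, hzi] using heq i hiH

theorem stmt7 {V : Type*} [Fintype V] [DecidableEq V]
    (𝓗 : Set (Finset V)) (hne : ∀ H ∈ 𝓗, H.Nonempty)
    (hT : IsTetrisHypergraph 𝓗) : CondStar 𝓗 :=
  stmt7_general 𝓗 hT
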